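/- arXiv:1802.04249 — 2 statements merged into one kernel-verified Lean document; each statement's English description precedes it below -/
import Mathlib

section
/- In reservoir sampling with reservoir size b ≥ 2 over a stream of l items, for any two distinct items among the l items, the probability that both are simultaneously in the reservoir equals min(1, b(b-1)/(l(l-1))). -/
open Finset

lemma count_pair (n k : ℕ) (hk : 2 ≤ k) (j j' : Fin n) (h : j ≠ j') :
    (((Finset.univ : Finset (Fin n)).powersetCard k).filter
        (fun S => j ∈ S ∧ j' ∈ S)).card = (n-2).choose (k-2) := by
  have hcard : ((Finset.univ : Finset (Fin n)) \ {j, j'}).card = n - 2 := by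
    rw [card_sdiff_of_subset (by simp), Finset.card_pair h, card_univ, Fintype.card_fin]
  rw [← hcard, ← card_powersetCard]
  refine Finset.card_bij' (fun S _ => S \ {j, j'}) (fun T _ => insert j (insert j' T)) ?_ ?_ ?_ ?_
  · intro S hS
    simp only [mem_filter, mem_powersetCard] at hS
    obtain ⟨⟨hsub, hScard⟩, hj, hj'⟩ := hS
    rw [mem_powersetCard]
    constructor
    · exact sdiff_subset_sdiff hsub (le_refl _)
    · rw [card_sdiff_of_subset (by intro x hx; simp at hx; rcases hx with rfl | rfl <;> assumption)]
      rw [hScard, Finset.card_pair h]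
  · intro T hT
    simp only [mem_powersetCard] at hT
    obtain ⟨hsub, hTcard⟩ := hT
    have hjT : j ∉ T := fun hh => by simpa using (hsub hh)
    have hj'T : j' ∉ T := fun hh => by simpa using (hsub hh)
    simp only [mem_filter, mem_powersetCard]
    refine ⟨⟨subset_univ _, ?_⟩, by simp, by simp⟩
    rw [card_insert_of_notMem (by simp [hjT, h]), card_insert_of_notMem hj'T, hTcard]
    omega
  · intro S hS
    simp only [mem_filter] at hS
    obtain ⟨_, hj, hj'⟩ := hS
    ext x
    simp only [mem_insert, mem_sdiff, mem_insert, mem_singleton]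
    constructor
    · rintro (rfl | rfl | ⟨hx, _⟩) <;> first | exact hj | exact hj' | exact hx
    · intro hx
      by_cases h1 : x = j
      · left; exact h1
      by_cases h2 : x = j'
      · right; left; exact h2
      · right; right; exact ⟨hx, by tauto⟩
  · intro T hT
    simp only [mem_powersetCard] at hT
    have hjT : j ∉ T := fun hh => by simpa using (hT.1 hh)
    have hj'T : j' ∉ T := fun hh => by simpa using (hT.1 hh)
    ext x
    simp only [mem_sdiff, mem_insert, mem_singleton]
    constructor
    · rintro ⟨rfl | rfl | hx, hne⟩ <;> tauto
    · intro hx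
      refine ⟨by tauto, ?_⟩
      push_neg
      constructor <;> rintro rfl <;> contradiction

lemma choose_ratio (n k : ℕ) (hk : 2 ≤ k) (hkn : k ≤ n) :
    ((n-2).choose (k-2) : ℚ) / (n.choose k : ℚ)
      = ((k:ℚ) * ((k:ℚ)-1)) / ((n:ℚ) * ((n:ℚ)-1)) := by
  obtain ⟨m, rfl⟩ : ∃ m, n = m + 2 := ⟨n - 2, by omega⟩
  obtain ⟨i, rfl⟩ : ∃ i, k = i + 2 := ⟨k - 2, by omega⟩
  have key : (m+2) * ((m+1) * m.choose i) = (m+2).choose (i+2) * ((i+2) * (i+1)) := by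
    have h1 := Nat.add_one_mul_choose_eq m i
    have h2 := Nat.add_one_mul_choose_eq (m+1) (i+1)
    calc (m+2) * ((m+1) * m.choose i) = (m+2) * ((m+1).choose (i+1) * (i+1)) := by rw [← h1]
    _ = ((m+2) * (m+1).choose (i+1)) * (i+1) := by ring
    _ = ((m+2).choose (i+2) * (i+2)) * (i+1) := by rw [← h2]
    _ = (m+2).choose (i+2) * ((i+2) * (i+1)) := by ring
  have hch : (0:ℚ) < ((m+2).choose (i+2) : ℚ) := by
    exact_mod_cast Nat.choose_pos (by omega : i+2 ≤ m+2)
  have hn : ((m+2:ℕ):ℚ) * (((m+2:ℕ):ℚ)-1) ≠ 0 := by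
    push_cast
    intro hc
    nlinarith [hc]
  simp only [show m+2-2 = m from rfl, show i+2-2 = i from rfl]
  rw [div_eq_div_iff (ne_of_gt hch) hn]
  have := congrArg (fun x : ℕ => (x : ℚ)) key
  push_cast at this ⊢
  linarith [this]

/-- Reservoir sampling with reservoir size `b ≥ 2` over a stream of `l` items:
the reservoir is a uniformly random `min b l`-subset of the `l` items
(all items when `l ≤ b`, a uniform `b`-subset when `l ≥ b`).
For any two distinct items, the probability that both are simultaneously in the
reservoir equals `min 1 (b(b-1)/(l(l-1)))`. -/
theorem reservoir_pair_inclusion_prob (b l : ℕ) (hb : 2 ≤ b) (j j' : Fin l) (hjj' : j ≠ j') :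
    ((((Finset.univ : Finset (Fin l)).powersetCard (min b l)).filter
        (fun S => j ∈ S ∧ j' ∈ S)).card : ℚ) /
      (((Finset.univ : Finset (Fin l)).powersetCard (min b l)).card : ℚ)
      = min 1 (((b : ℚ) * ((b : ℚ) - 1)) / ((l : ℚ) * ((l : ℚ) - 1))) := by
  have hl : 2 ≤ l := by
    have h1 := j.isLt
    have h2 := j'.isLt
    by_contra h
    push_neg at h
    exact hjj' (Fin.ext (by omega))
  set k := min b l with hkdef
  have hk2 : 2 ≤ k := le_min hb hl
  have hkl : k ≤ l := min_le_right _ _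
  rw [count_pair l k hk2 j j' hjj', Finset.card_powersetCard, Finset.card_univ,
    Fintype.card_fin, choose_ratio l k hk2 hkl]
  have hlQ : (2:ℚ) ≤ (l:ℚ) := by exact_mod_cast hl
  have hbQ : (2:ℚ) ≤ (b:ℚ) := by exact_mod_cast hb
  have hlpos : (0:ℚ) < (l:ℚ) * ((l:ℚ) - 1) := by nlinarith
  rcases le_or_gt l b with h | h
  · have hk : k = l := min_eq_right h
    have hQ : (l:ℚ) ≤ (b:ℚ) := by exact_mod_cast h
    rw [hk, min_eq_left (by rw [le_div_iff₀ hlpos]; nlinarith), div_self (ne_of_gt hlpos)]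
  · have hk : k = b := min_eq_left h.le
    have hQ : (b:ℚ) + 1 ≤ (l:ℚ) := by exact_mod_cast h
    rw [hk, min_eq_right (by rw [div_le_one hlpos]; nlinarith)]
end

section
/- Let f : V → {1,…,k} be a uniformly random independent coloring of four distinct nodes u, v, w, x. Consider a Type 2 triangle pair: triangle {u,v,w} whose last edge is {v,w} (responsible worker = f(u) if f(v) ≠ f(w), else f(v)), and triangle {u,v,x} whose last edge is {x,u} (responsible worker = f(v) if f(x) ≠ f(u), else f(x)). Then for any fixed color i, the probability that both triangles are assigned to worker i equals (3k² − 4k + 2)/k⁴, which is O(1/k²). -/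
/-!
The event depends only on the colours of `u, v, w, x`, and since these nodes are distinct their
colours are uniform on `(Fin k)⁴`; so it suffices to count colour tuples. Once the colours `a` of
`u` and `b` of `v` are fixed, the two triangles constrain the colours of `w` and of `x`
separately: the first triangle goes to `i` for `[b = i] + (k - 1) [a = i]` colours of `w`, the
second for `[a = i] + (k - 1) [b = i]` colours of `x`. Summing the products over `(a, b)` gives
`k² + 2 (k - 1)² = 3k² - 4k + 2`.
-/

open Finset Function

section Restriction

variable {ι V α : Type*} [Fintype ι] [DecidableEq ι] [Fintype V] [DecidableEq V] [Fintype α]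
  {e : ι → V}

theorem card_filter_comp_of_injective (he : Injective e) (P : (ι → α) → Prop)
    [DecidablePred P] :
    #{f : V → α | P (f ∘ e)} =
      #{g : ι → α | P g} * Fintype.card α ^ (Fintype.card V - Fintype.card ι) := by
  classical
  let E : (V → α) ≃ (ι → α) × ({y // y ∉ Set.range e} → α) :=
    (Equiv.piEquivPiSubtypeProd (· ∈ Set.range e) fun _ => α).trans
      (((Equiv.ofInjective e he).arrowCongr (Equiv.refl α)).symm.prodCongr (Equiv.refl _))
  have hE : ∀ f, (E f).1 = f ∘ e := fun _ => rfl
  rw [card_equiv E (t := ({g | P g} : Finset (ι → α)) ×ˢ univ) fun f => by simp [hE],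
    card_product, card_univ, Fintype.card_fun, Fintype.card_subtype_compl,
    Set.card_range_of_injective he]

theorem card_filter_comp_div_card_of_injective [Nonempty α] (he : Injective e)
    (P : (ι → α) → Prop) [DecidablePred P] :
    (#{f : V → α | P (f ∘ e)} : ℚ) / #(univ : Finset (V → α)) =
      #{g : ι → α | P g} / #(univ : Finset (ι → α)) := by
  have hιV : Fintype.card ι ≤ Fintype.card V := Fintype.card_le_of_injective e he
  have hpos : (Fintype.card α : ℚ) ^ (Fintype.card V - Fintype.card ι) ≠ 0 := by positivity
  rw [card_filter_comp_of_injective he, card_univ, card_univ, Fintype.card_fun, Fintype.card_fun,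
    ← Nat.add_sub_cancel' hιV, pow_add, Nat.add_sub_cancel_left]
  push_cast
  exact mul_div_mul_right _ _ hpos

end Restriction

@[simps]
def finFourArrowEquiv (α : Type*) : (Fin 4 → α) ≃ α × α × α × α where
  toFun g := (g 0, g 1, g 2, g 3)
  invFun q := ![q.1, q.2.1, q.2.2.1, q.2.2.2]
  left_inv g := by ext j; fin_cases j <;> rfl
  right_inv _ := rfl

section Worker

variable {α : Type*} [DecidableEq α]

-- The worker of a triangle whose last edge has endpoint colours `a, b` and whose third node
-- has colour `c`.
def responsibleWorker (a b c : α) : α := if a = b then a else c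

theorem responsibleWorker_comm (a b c : α) :
    responsibleWorker a b c = responsibleWorker b a c := by
  by_cases h : a = b <;> simp [responsibleWorker, h, eq_comm]

-- `g` lists the colours of `u, v, w, x`; the triangles `{u, v, w}` and `{u, v, x}` have last
-- edges `{v, w}` and `{x, u}`.
abbrev bothAssignedTo (i : α) (g : Fin 4 → α) : Prop :=
  responsibleWorker (g 1) (g 2) (g 0) = i ∧ responsibleWorker (g 3) (g 0) (g 1) = i

variable [Fintype α]

theorem card_responsibleWorker_eq (a c i : α) :
    #{b | responsibleWorker a b c = i} =
      (if a = i then 1 else 0) + (Fintype.card α - 1) * (if c = i then 1 else 0) := by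
  have off_diagonal : ∀ b ∈ univ.erase a,
      (if responsibleWorker a b c = i then 1 else 0) = if c = i then 1 else 0 := fun b hb => by
    simp [responsibleWorker, Ne.symm (ne_of_mem_erase hb)]
  rw [card_filter, ← add_sum_erase _ _ (mem_univ a), sum_congr rfl off_diagonal, sum_const,
    card_erase_of_mem (mem_univ a), card_univ, smul_eq_mul, mul_ite, mul_one, mul_zero]
  simp [responsibleWorker]

theorem card_bothAssignedTo_eq_sum (i : α) :
    #{g | bothAssignedTo i g} =
      ∑ a, ∑ b, #{c | responsibleWorker b c a = i} * #{d | responsibleWorker a d b = i} := by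
  rw [card_equiv (finFourArrowEquiv α) (t := {q | responsibleWorker q.2.1 q.2.2.1 q.1 = i ∧
    responsibleWorker q.1 q.2.2.2 q.2.1 = i}) fun g => by simp [responsibleWorker_comm (g 3)]]
  simp only [card_filter, Fintype.sum_prod_type, sum_mul_sum, boole_mul, ite_and]

theorem card_bothAssignedTo (i : α) :
    #{g | bothAssignedTo i g} = Fintype.card α ^ 2 + 2 * (Fintype.card α - 1) ^ 2 := by
  obtain ⟨m, hm⟩ := Nat.exists_eq_add_one.mpr (Fintype.card_pos_iff.mpr ⟨i⟩)
  rw [card_bothAssignedTo_eq_sum]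
  simp only [card_responsibleWorker_eq, hm, add_tsub_cancel_right, mul_ite, mul_one, mul_zero,
    mul_add, add_mul, ite_mul, one_mul, zero_mul, sum_add_distrib, sum_ite_irrel, sum_ite_eq',
    mem_univ, ↓reduceIte, sum_const, card_univ, smul_eq_mul]
  ring

end Worker

/-- Type 2 triangle pair collision probability. For four distinct nodes `u,v,w,x`
colored independently and uniformly with `k` colors: triangle `{u,v,w}` with last
edge `{v,w}` is assigned to `f(u)` if `f(v) ≠ f(w)` and to `f(v)` otherwise;
triangle `{u,v,x}` with last edge `{x,u}` is assigned to `f(v)` if `f(x) ≠ f(u)`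
and to `f(x)` otherwise. For any fixed color `i`, the probability that both
triangles are assigned to worker `i` equals `(3k² − 4k + 2)/k⁴`,
which is `O(1/k²)` (at most `3/k²`). -/
theorem type2_pair_collision_prob {V : Type*} [Fintype V] [DecidableEq V]
    (k : ℕ) (hk : 1 ≤ k) (u v w x : V)
    (huv : u ≠ v) (huw : u ≠ w) (hux : u ≠ x)
    (hvw : v ≠ w) (hvx : v ≠ x) (hwx : w ≠ x) (i : Fin k) :
    (((Finset.univ : Finset (V → Fin k)).filter
        (fun f => (if f v = f w then f v else f u) = i ∧
                  (if f x = f u then f x else f v) = i)).card : ℚ) /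
      (((Finset.univ : Finset (V → Fin k)).card : ℚ))
      = (3 * (k : ℚ) ^ 2 - 4 * (k : ℚ) + 2) / (k : ℚ) ^ 4 ∧
    (3 * (k : ℚ) ^ 2 - 4 * (k : ℚ) + 2) / (k : ℚ) ^ 4 ≤ 3 / (k : ℚ) ^ 2 := by
  have he : Injective ![u, v, w, x] := by
    intro a b
    fin_cases a <;> fin_cases b <;> simp [*, eq_comm]
  have : Nonempty (Fin k) := ⟨i⟩
  have hk₁ : (1 : ℚ) ≤ k := by exact_mod_cast hk
  constructor
  · have hprob := card_filter_comp_div_card_of_injective he (bothAssignedTo i)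
    rw [card_bothAssignedTo, card_univ (α := Fin 4 → Fin k), Fintype.card_fun, Fintype.card_fin,
      Fintype.card_fin] at hprob
    push_cast [Nat.cast_sub hk] at hprob
    exact hprob.trans (by ring)
  · rw [div_le_div_iff₀ (by positivity) (by positivity)]
    nlinarith
end
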